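/- Define f(m,n,d) = kₘ·c₁(n;d)³ + bₘ·c₁(n;d)·c₂(n;d) - c₃(n;d), where kₘ = (-28m + m² + 4m³ - m⁴)/((m-4)(m-3)(3m² - 5m - 20)) and bₘ = (-120 + 254m + 3m² - 50m³ + 9m⁴)/(3(m-4)(m-3)(3m² - 5m - 20)). Then f(m,n,d) ≥ 0 whenever either (1) m, n are positive integers, d is a real with d ≥ 1, n·d is an integer with n·d ≥ 5, and m ≥ 10; or (2) m ∈ {6,7,8,9}, n is a positive integer, d is a real with d ≥ 1, and n·d is an integer with n·d ≥ 11. -/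

import Mathlib

/-- For `n` hypersurfaces all of degree `d + 1`: `s_j = n·dʲ`, `c₁(n;d) = 4 - s₁`. -/
def chernEq1 (n : ℕ) (d : ℝ) : ℝ := 4 - (n : ℝ) * d

/-- `c₂(n;d) = (s₁² + s₂)/2 - 3(s₁ - 2)` with `s_j = n·dʲ`. -/
noncomputable def chernEq2 (n : ℕ) (d : ℝ) : ℝ :=
  (((n : ℝ) * d) ^ 2 + (n : ℝ) * d ^ 2) / 2 - 3 * ((n : ℝ) * d - 2)

/-- `c₃(n;d) = -(s₁³ + 3s₁s₂ + 2s₃)/6 + (s₁² + s₂) - 3s₁ + 4` with `s_j = n·dʲ`. -/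
noncomputable def chernEq3 (n : ℕ) (d : ℝ) : ℝ :=
  -(((n : ℝ) * d) ^ 3 + 3 * ((n : ℝ) * d) * ((n : ℝ) * d ^ 2) + 2 * ((n : ℝ) * d ^ 3)) / 6
    + (((n : ℝ) * d) ^ 2 + (n : ℝ) * d ^ 2) - 3 * ((n : ℝ) * d) + 4

/-- The slope `kₘ` of the line through `Q(m;1,…,1)` and `Q(m+1;1,…,1)` for `m ≥ 6`. -/
noncomputable def kGen (m : ℕ) : ℝ :=
  (-28 * (m : ℝ) + (m : ℝ) ^ 2 + 4 * (m : ℝ) ^ 3 - (m : ℝ) ^ 4) /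
    (((m : ℝ) - 4) * ((m : ℝ) - 3) * (3 * (m : ℝ) ^ 2 - 5 * (m : ℝ) - 20))

/-- The intercept `bₘ` of the line through `Q(m;1,…,1)` and `Q(m+1;1,…,1)` for `m ≥ 6`. -/
noncomputable def bGen (m : ℕ) : ℝ :=
  (-120 + 254 * (m : ℝ) + 3 * (m : ℝ) ^ 2 - 50 * (m : ℝ) ^ 3 + 9 * (m : ℝ) ^ 4) /
    (3 * ((m : ℝ) - 4) * ((m : ℝ) - 3) * (3 * (m : ℝ) ^ 2 - 5 * (m : ℝ) - 20))

/-!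
Clearing the positive denominator `3 (m-4)(m-3)(3m²-5m-20)`, `f(m,n,d)` becomes a quadratic in
`e = d - 1` whose coefficients are polynomials in `m` and `x = n d`. Its constant term
`3 (x-m)(x-m-1) · constFactor` is nonnegative because `x` is an integer, its leading coefficient
is positive, and either its middle coefficient `x · linCoeff` is nonnegative or its discriminant
is nonpositive. The discriminant bound is a polynomial inequality which, after shifting
`m = 10 + p` and passing to `u = -linCoeff`, or after shifting `x = 11 + q` for `m ≤ 9`, has only
nonnegative coefficients.
-/

lemma quadratic_nonneg_of_discrim_nonpos {K : Type*} [Field K] [LinearOrder K]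
    [IsStrictOrderedRing K] {a b c : K} (ha : 0 < a) (h : discrim a b c ≤ 0) (x : K) :
    0 ≤ a * (x * x) + b * x + c := by
  have hsq : 4 * a * (a * (x * x) + b * x + c) = (2 * a * x + b) ^ 2 - discrim a b c := by
    rw [discrim]; ring
  refine nonneg_of_mul_nonneg_right ?_ (by positivity : 0 < 4 * a)
  rw [hsq]
  exact sub_nonneg.2 (h.trans (sq_nonneg _))

lemma cast_mul_sub_one_nonneg (k : ℤ) : (0 : ℝ) ≤ k * (k - 1) := by
  have : (0 : ℤ) ≤ k * (k - 1) := by rcases le_or_gt k 0 with h | h <;> nlinarith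
  exact_mod_cast this

lemma cubic_le_of_coeff_le {G κ M h c u A B : ℝ} (hu : 0 ≤ u) (hG : 0 ≤ G) (hA : 0 ≤ A)
    (hB : 0 ≤ B) (hκ : 0 ≤ κ) (hM : 0 ≤ M) (h₃ : h ^ 2 ≤ 12 * G * κ)
    (h₂ : h ^ 2 * c ≤ 12 * G * (κ * (A + B) + M)) :
    h ^ 2 * (u + c) * u ^ 2 ≤ 12 * G * ((u + A) * (u + B)) * (κ * u + M) := by
  have h₁ : 0 ≤ 12 * G * (κ * A * B + (A + B) * M) := by positivity
  have h₀ : 0 ≤ 12 * G * (A * B * M) := by positivity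
  nlinarith [mul_le_mul_of_nonneg_right h₃ (pow_nonneg hu 3),
    mul_le_mul_of_nonneg_right h₂ (sq_nonneg u), mul_nonneg h₁ hu]

section AboveLine

variable {a x : ℝ}

def sqCoeff (a : ℝ) : ℝ := 3 * a ^ 4 - 26 * a ^ 3 + 51 * a ^ 2 + 80 * a - 240

def linCoeff (a x : ℝ) : ℝ :=
  15 * a ^ 4 - 74 * a ^ 3 - 45 * a ^ 2 + 428 * a - (14 * a ^ 3 - 75 * a ^ 2 + 7 * a + 300) * x

def constFactor (a x : ℝ) : ℝ := (7 * a ^ 2 - a - 20) * x - 4 * (a + 4) * (a + 5)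

/-- With `x = n d` and `e = d - 1`, the numerator of `f(m,n,d)` over `3 (m-4)(m-3)(3m²-5m-20)`. -/
def aboveLineNum (a x e : ℝ) : ℝ :=
  x * sqCoeff a * (e * e) + x * linCoeff a x * e + 3 * ((x - a) * (x - a - 1)) * constFactor a x

lemma sqCoeff_pos (ha : 6 ≤ a) : 0 < sqCoeff a := by
  obtain ⟨p, hp, rfl⟩ : ∃ p, 0 ≤ p ∧ a = 6 + p := ⟨a - 6, by linarith, by ring⟩
  unfold sqCoeff
  ring_nf
  positivity

lemma constFactor_nonneg (ha : 4 ≤ a) (hx : 5 ≤ x) : 0 ≤ constFactor a x := by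
  unfold constFactor
  nlinarith [mul_le_mul_of_nonneg_left hx (by nlinarith : (0 : ℝ) ≤ 7 * a ^ 2 - a - 20)]

lemma discrim_le_of_ten_le (ha : 10 ≤ a) (hS : linCoeff a x ≤ 0) :
    x * linCoeff a x ^ 2 ≤ 12 * ((x - a) * (x - a - 1)) * constFactor a x * sqCoeff a := by
  obtain ⟨p, hp, rfl⟩ : ∃ p, 0 ≤ p ∧ a = 10 + p := ⟨a - 10, by linarith, by ring⟩
  set a := 10 + p
  set h := 14 * a ^ 3 - 75 * a ^ 2 + 7 * a + 300
  set c := 15 * a ^ 4 - 74 * a ^ 3 - 45 * a ^ 2 + 428 * a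
  set κ := 7 * a ^ 2 - a - 20
  set A := c - a * h
  set B := A - h
  set M := κ * c - 4 * (a + 4) * (a + 5) * h
  -- Multiplied by `h³`, both sides are cubics in `u = -linCoeff a x ≥ 0`, and their coefficients
  -- compare as polynomials in `p` with nonnegative coefficients.
  set u := -linCoeff a x with hu
  have hlin : linCoeff a x = c - h * x := rfl
  have hpos : 0 < h ∧ 0 ≤ sqCoeff a ∧ 0 ≤ A ∧ 0 ≤ B ∧ 0 ≤ κ ∧ 0 ≤ M ∧
      h ^ 2 ≤ 12 * sqCoeff a * κ ∧ h ^ 2 * c ≤ 12 * sqCoeff a * (κ * (A + B) + M) := by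
    refine ⟨?_, ?_, ?_, ?_, ?_, ?_, ?_, ?_⟩ <;> (try rw [← sub_nonneg]) <;>
    · simp only [h, c, κ, A, B, M, a, sqCoeff]
      ring_nf
      positivity
  obtain ⟨h_pos, hG, hA, hB, hκ, hM, h₃, h₂⟩ := hpos
  have hJ : h ^ 2 * ((x - a) * (x - a - 1)) = (u + A) * (u + B) := by rw [hu, hlin]; ring
  have hL : h * constFactor a x = κ * u + M := by rw [hu, hlin, constFactor]; ring
  have hx : h * x = u + c := by rw [hu, hlin]; ring
  refine le_of_mul_le_mul_left ?_ (pow_pos h_pos 3)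
  calc h ^ 3 * (x * linCoeff a x ^ 2) = h ^ 2 * (h * x) * u ^ 2 := by rw [hu]; ring
    _ = h ^ 2 * (u + c) * u ^ 2 := by rw [hx]
    _ ≤ 12 * sqCoeff a * ((u + A) * (u + B)) * (κ * u + M) :=
        cubic_le_of_coeff_le (by linarith) hG hA hB hκ hM h₃ h₂
    _ = h ^ 3 * (12 * ((x - a) * (x - a - 1)) * constFactor a x * sqCoeff a) := by
        rw [← hJ, ← hL]; ring

lemma discrim_le_of_eleven_le (ha : a = 6 ∨ a = 7 ∨ a = 8 ∨ a = 9) (hx : 11 ≤ x) :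
    x * linCoeff a x ^ 2 ≤ 12 * ((x - a) * (x - a - 1)) * constFactor a x * sqCoeff a := by
  obtain ⟨q, hq, rfl⟩ : ∃ q, 0 ≤ q ∧ x = 11 + q := ⟨x - 11, by linarith, by ring⟩
  rw [← sub_nonneg]
  rcases ha with rfl | rfl | rfl | rfl <;>
  · unfold sqCoeff linCoeff constFactor
    ring_nf
    positivity

lemma aboveLineNum_nonneg {e : ℝ} (ha : 6 ≤ a) (hx : 5 ≤ x) (he : 0 ≤ e)
    (hJ : 0 ≤ (x - a) * (x - a - 1))
    (hS : 0 ≤ linCoeff a x ∨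
      x * linCoeff a x ^ 2 ≤ 12 * ((x - a) * (x - a - 1)) * constFactor a x * sqCoeff a) :
    0 ≤ aboveLineNum a x e := by
  have hG := sqCoeff_pos ha
  have hL : 0 ≤ constFactor a x := constFactor_nonneg (by linarith) hx
  rcases hS with hS | hS
  · unfold aboveLineNum
    positivity
  · refine quadratic_nonneg_of_discrim_nonpos (by positivity) ?_ e
    have hdisc : discrim (x * sqCoeff a) (x * linCoeff a x)
          (3 * ((x - a) * (x - a - 1)) * constFactor a x) =
        x * (x * linCoeff a x ^ 2 -
          12 * ((x - a) * (x - a - 1)) * constFactor a x * sqCoeff a) := by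
      rw [discrim]; ring
    rw [hdisc]
    exact mul_nonpos_of_nonneg_of_nonpos (by linarith) (by linarith)

end AboveLine

lemma chern_combination_eq (m n : ℕ) (d : ℝ)
    (hm : ((m : ℝ) - 4) * ((m : ℝ) - 3) * (3 * (m : ℝ) ^ 2 - 5 * (m : ℝ) - 20) ≠ 0) :
    kGen m * chernEq1 n d ^ 3 + bGen m * (chernEq1 n d * chernEq2 n d) - chernEq3 n d =
      aboveLineNum m (n * d) (d - 1) /
        (3 * (((m : ℝ) - 4) * ((m : ℝ) - 3) * (3 * (m : ℝ) ^ 2 - 5 * (m : ℝ) - 20))) := by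
  simp only [mul_ne_zero_iff] at hm
  obtain ⟨⟨h4, h3⟩, hq⟩ := hm
  unfold kGen bGen chernEq1 chernEq2 chernEq3 aboveLineNum sqCoeff linCoeff constFactor
  have hq' : (m : ℝ) * ((m : ℝ) * 3 - 5) - 20 ≠ 0 := fun h => hq (by linear_combination h)
  field_simp [hq']
  ring

theorem above_line_pm_equal_degrees_general
    (m n : ℕ) (d : ℝ) (hd : 1 ≤ d)
    (hint : ∃ N : ℤ, (n : ℝ) * d = (N : ℝ))
    (hcase : (10 ≤ m ∧ 5 ≤ (n : ℝ) * d) ∨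
             ((m = 6 ∨ m = 7 ∨ m = 8 ∨ m = 9) ∧ 11 ≤ (n : ℝ) * d)) :
    0 ≤ kGen m * chernEq1 n d ^ 3 + bGen m * (chernEq1 n d * chernEq2 n d)
        - chernEq3 n d := by
  obtain ⟨N, hN⟩ := hint
  have hm : (6 : ℝ) ≤ m := by
    exact_mod_cast (show 6 ≤ m by rcases hcase with ⟨h, _⟩ | ⟨h, _⟩ <;> omega)
  have hx : (5 : ℝ) ≤ n * d := by rcases hcase with ⟨_, h⟩ | ⟨_, h⟩ <;> linarith
  have hJ : 0 ≤ ((n : ℝ) * d - m) * ((n : ℝ) * d - m - 1) := by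
    simpa [hN] using cast_mul_sub_one_nonneg (N - m)
  have hS : 0 ≤ linCoeff m (n * d) ∨ (n * d) * linCoeff m (n * d) ^ 2 ≤
      12 * ((n * d - m) * (n * d - m - 1)) * constFactor m (n * d) * sqCoeff m := by
    rcases hcase with ⟨hm10, -⟩ | ⟨hm69, hx11⟩
    · exact (le_or_gt 0 _).imp_right fun hneg =>
        discrim_le_of_ten_le (by exact_mod_cast hm10) hneg.le
    · refine .inr (discrim_le_of_eleven_le ?_ hx11)
      rcases hm69 with rfl | rfl | rfl | rfl <;> norm_num
  have hD : 0 < ((m : ℝ) - 4) * ((m : ℝ) - 3) * (3 * (m : ℝ) ^ 2 - 5 * (m : ℝ) - 20) := by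
    exact mul_pos (mul_pos (by linarith) (by linarith)) (by nlinarith)
  rw [chern_combination_eq m n d hD.ne']
  exact div_nonneg (aboveLineNum_nonneg hm hx (by linarith) hJ hS) (by positivity)

theorem above_line_pm_equal_degrees
    (m n : ℕ) (hm : 0 < m) (hn : 0 < n) (d : ℝ) (hd : 1 ≤ d)
    (hint : ∃ N : ℤ, (n : ℝ) * d = (N : ℝ))
    (hcase : (10 ≤ m ∧ 5 ≤ (n : ℝ) * d) ∨
             ((m = 6 ∨ m = 7 ∨ m = 8 ∨ m = 9) ∧ 11 ≤ (n : ℝ) * d)) :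
    0 ≤ kGen m * chernEq1 n d ^ 3 + bGen m * (chernEq1 n d * chernEq2 n d)
        - chernEq3 n d :=
  above_line_pm_equal_degrees_general m n d hd hint hcase
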